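/- If v is an interior node and v' is a maximal neighbor of v, then the boundary circles ∂Z(v) and ∂Z(v') intersect in exactly two distinct points. -/

import Mathlib

open Metric

noncomputable section

/-- Points of the plane. -/
abbrev Pt := EuclideanSpace ℝ (Fin 2)

/-- `Zd r p` : the closed disk (communication zone) of radius `r` centered at `p`. -/
def Zd (r : ℝ) (p : Pt) : Set Pt := Metric.closedBall p r

/-- `Zb r p` : the boundary circle of the communication zone of `p`. -/
def Zb (r : ℝ) (p : Pt) : Set Pt := Metric.sphere p r

/-- The arc-containment relation `a ⪯_v b`. -/
def arcLe (r : ℝ) (v a b : Pt) : Prop := Zd r a ∩ Zb r v ⊆ Zd r b ∩ Zb r v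

/-- `u` is a neighbor of `v`. -/
def Nbr (r : ℝ) (v u : Pt) : Prop := u ≠ v ∧ dist u v ≤ r

/-- General position: no three distinct points of `V` are collinear. -/
def GenPos (V : Set Pt) : Prop :=
  ∀ a ∈ V, ∀ b ∈ V, ∀ c ∈ V, a ≠ b → a ≠ c → b ≠ c → ¬ Collinear ℝ ({a, b, c} : Set Pt)

/-- `u` is a maximal neighbor of `v` within `V`. -/
def MaxNbr (V : Set Pt) (r : ℝ) (v u : Pt) : Prop :=
  u ∈ V ∧ Nbr r v u ∧ ∀ u' ∈ V, u' ≠ u → Nbr r v u' → ¬ arcLe r v u u'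

/-- `v` is an interior node of `V`. -/
def IsInterior (V : Set Pt) (r : ℝ) (v : Pt) : Prop :=
  ∀ z ∈ Zb r v, ∃ v' ∈ V, v' ≠ v ∧ z ∈ Zd r v'

/-- Counterclockwise rotation by `π/2`. -/
def rot90 (x : Pt) : Pt := (WithLp.equiv 2 (Fin 2 → ℝ)).symm ![-(x 1), x 0]

/-- The boundary intersection `CCW(v, v')` of the circles `∂Z(v)` and `∂Z(v')`:
traversing from `CCW(v,v')` to `CW(v,v')` clockwise along `∂Z(v)` sweeps an angle `< π`. -/
def ccwPt (r : ℝ) (v v' : Pt) : Pt :=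
  midpoint ℝ v v' + (Real.sqrt (r ^ 2 - (dist v v' / 2) ^ 2) / dist v v') • rot90 (v' - v)

/-- The boundary intersection `CW(v, v')`. -/
def cwPt (r : ℝ) (v v' : Pt) : Pt :=
  midpoint ℝ v v' - (Real.sqrt (r ^ 2 - (dist v v' / 2) ^ 2) / dist v v') • rot90 (v' - v)

/-- A communication wheel of `v` with `m` rim nodes `w 0, …, w (m-1)` (indices mod `m`). -/
def IsCommWheel (V : Set Pt) (r : ℝ) (v : Pt) (m : ℕ) (w : ZMod m → Pt) : Prop :=
  3 ≤ m ∧ Function.Injective w ∧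
  (∀ i, MaxNbr V r v (w i)) ∧
  (∀ i, dist (w i) (w (i + 1)) ≤ r) ∧
  (∀ i, ccwPt r v (w i) ∈ Zd r (w (i + 1)) ∧ cwPt r v (w i) ∈ Zd r (w (i - 1)))

/-! A maximal neighbour `v'` of `v` is in particular a neighbour, so `0 < d := dist v v' ≤ r < 2r`.
Then `midpoint v v' ± (√(r² - (d/2)²) / d) • rot90 (v' - v)` are two distinct points on both
circles (Pythagoras, since `rot90 (v' - v)` is orthogonal to `v' - v` and has length `d`), and two
circles with distinct centres in the plane meet in at most two points. -/

open scoped InnerProductSpace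

section MidpointOffset

variable {E : Type*} [NormedAddCommGroup E] [InnerProductSpace ℝ E]

theorem dist_midpoint_add_left_sq {v w u : E} (h : ⟪w - v, u⟫_ℝ = 0) :
    dist (midpoint ℝ v w + u) v ^ 2 = (dist v w / 2) ^ 2 + ‖u‖ ^ 2 := by
  have hsplit : midpoint ℝ v w + u - v = (2⁻¹ : ℝ) • (w - v) + u := by
    rw [add_sub_right_comm, midpoint_sub_left, invOf_eq_inv]
  have horth : ⟪(2⁻¹ : ℝ) • (w - v), u⟫_ℝ = 0 := by rw [real_inner_smul_left, h, mul_zero]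
  rw [dist_eq_norm, hsplit, norm_add_sq_real, horth, norm_smul, dist_eq_norm',
    Real.norm_of_nonneg (by norm_num)]
  ring

theorem dist_midpoint_add_right_sq {v w u : E} (h : ⟪w - v, u⟫_ℝ = 0) :
    dist (midpoint ℝ v w + u) w ^ 2 = (dist v w / 2) ^ 2 + ‖u‖ ^ 2 := by
  have h' : ⟪v - w, u⟫_ℝ = 0 := by rw [← neg_sub, inner_neg_left, h, neg_zero]
  rw [midpoint_comm, dist_midpoint_add_left_sq h', dist_comm]

end MidpointOffset

theorem inner_rot90_right (x : Pt) : ⟪x, rot90 x⟫_ℝ = 0 := by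
  simp [rot90, PiLp.inner_apply, Fin.sum_univ_two]
  ring

theorem norm_rot90 (x : Pt) : ‖rot90 x‖ = ‖x‖ := by
  simp [rot90, EuclideanSpace.norm_eq, Fin.sum_univ_two, add_comm]

theorem midpoint_add_smul_rot90_mem_sphere {r t : ℝ} {v w : Pt} (hr : 0 ≤ r)
    (ht : t ^ 2 * dist v w ^ 2 = r ^ 2 - (dist v w / 2) ^ 2) :
    midpoint ℝ v w + t • rot90 (w - v) ∈ sphere v r ∩ sphere w r := by
  have horth : ⟪w - v, t • rot90 (w - v)⟫_ℝ = 0 := by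
    rw [real_inner_smul_right, inner_rot90_right, mul_zero]
  have hnorm : ‖t • rot90 (w - v)‖ ^ 2 = t ^ 2 * dist v w ^ 2 := by
    rw [norm_smul, norm_rot90, ← dist_eq_norm', mul_pow, Real.norm_eq_abs, sq_abs]
  constructor
  · rw [mem_sphere, ← sq_eq_sq₀ dist_nonneg hr, dist_midpoint_add_left_sq horth, hnorm, ht]; ring
  · rw [mem_sphere, ← sq_eq_sq₀ dist_nonneg hr, dist_midpoint_add_right_sq horth, hnorm, ht]; ring

section TwoCircles

variable {r : ℝ} {v w : Pt}

theorem sq_offset_mul_dist_sq (hvw : v ≠ w) (h : dist v w ≤ 2 * r) :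
    (√(r ^ 2 - (dist v w / 2) ^ 2) / dist v w) ^ 2 * dist v w ^ 2 =
      r ^ 2 - (dist v w / 2) ^ 2 := by
  have hD : dist v w ≠ 0 := dist_ne_zero.2 hvw
  have hnonneg : 0 ≤ r ^ 2 - (dist v w / 2) ^ 2 := by nlinarith [dist_nonneg (x := v) (y := w)]
  rw [div_pow, div_mul_cancel₀ _ (pow_ne_zero 2 hD), Real.sq_sqrt hnonneg]

theorem ccwPt_mem_sphere_inter (hvw : v ≠ w) (h : dist v w ≤ 2 * r) :
    ccwPt r v w ∈ sphere v r ∩ sphere w r :=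
  midpoint_add_smul_rot90_mem_sphere (by linarith [dist_nonneg (x := v) (y := w)])
    (sq_offset_mul_dist_sq hvw h)

theorem cwPt_mem_sphere_inter (hvw : v ≠ w) (h : dist v w ≤ 2 * r) :
    cwPt r v w ∈ sphere v r ∩ sphere w r := by
  rw [cwPt, sub_eq_add_neg, ← neg_smul]
  exact midpoint_add_smul_rot90_mem_sphere (by linarith [dist_nonneg (x := v) (y := w)])
    (by rw [neg_sq]; exact sq_offset_mul_dist_sq hvw h)

theorem ccwPt_ne_cwPt (hvw : v ≠ w) (h : dist v w < 2 * r) : ccwPt r v w ≠ cwPt r v w := by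
  have hD : 0 < dist v w := dist_pos.2 hvw
  have hs : 0 < √(r ^ 2 - (dist v w / 2) ^ 2) := Real.sqrt_pos.2 (by nlinarith)
  have hrot : rot90 (w - v) ≠ 0 := by
    rw [← norm_ne_zero_iff, norm_rot90, ← dist_eq_norm']
    exact hD.ne'
  intro heq
  have hdiff := sub_eq_zero.2 heq
  rw [ccwPt, cwPt, add_sub_sub_cancel, ← two_smul ℝ, smul_smul] at hdiff
  exact smul_ne_zero (mul_pos two_pos (div_pos hs hD)).ne' hrot hdiff

theorem sphere_inter_sphere_eq_pair (hvw : v ≠ w) (h : dist v w < 2 * r) :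
    sphere v r ∩ sphere w r = {ccwPt r v w, cwPt r v w} := by
  have hccw := ccwPt_mem_sphere_inter hvw h.le
  have hcw := cwPt_mem_sphere_inter hvw h.le
  refine Set.Subset.antisymm ?_ (Set.insert_subset_iff.2 ⟨hccw, Set.singleton_subset_iff.2 hcw⟩)
  rintro x ⟨hxv, hxw⟩
  exact EuclideanGeometry.eq_of_dist_eq_of_dist_eq_of_finrank_eq_two finrank_euclideanSpace_fin hvw
    (ccwPt_ne_cwPt hvw h) hccw.1 hcw.1 hxv hccw.2 hcw.2 hxw

end TwoCircles

theorem stmt_6_general (V : Set Pt) (r : ℝ) (v v' : Pt) (hmax : MaxNbr V r v v') :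
    ∃ p q : Pt, p ≠ q ∧ Zb r v ∩ Zb r v' = {p, q} := by
  obtain ⟨-, ⟨hne, hdist⟩, -⟩ := hmax
  have hlt : dist v v' < 2 * r := by
    rw [dist_comm]
    linarith [dist_pos.2 hne]
  exact ⟨_, _, ccwPt_ne_cwPt hne.symm hlt, sphere_inter_sphere_eq_pair hne.symm hlt⟩

/-- boundary circles of a node and a maximal neighbor meet in exactly two points. -/
theorem stmt_6 (V : Set Pt) (hV : V.Finite) (hgp : GenPos V) (r : ℝ) (hr : 0 < r)
    (v v' : Pt) (hv : v ∈ V) (hint : IsInterior V r v) (hmax : MaxNbr V r v v') :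
    ∃ p q : Pt, p ≠ q ∧ Zb r v ∩ Zb r v' = {p, q} :=
  stmt_6_general V r v v' hmax
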